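/- For all t ∈ (0,1), log(1 + t²/2) ≤ (1/2)·((1+t)log(1+t) + (1-t)log(1-t)). -/

import Mathlib

/-!
Since `log (1 + x) ≤ x`, it suffices to show `t ^ 2 ≤ (1 + t) log (1 + t) + (1 - t) log (1 - t)`.
The difference of the two sides vanishes at `0`, and its derivative
`log (1 + t) - log (1 - t) - 2 t` is nonnegative for `t ≥ 0` by the first-order lower bound
`t ≤ artanh t` of the series `artanh t = ∑ t ^ (2k+1) / (2k+1)`.
-/

open Real Set

namespace Real

lemma hasDerivAt_mul_log_one_add_add_mul_log_one_sub {x : ℝ} (hx : x ∈ Ioo (-1) 1) :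
    HasDerivAt (fun y ↦ (1 + y) * log (1 + y) + (1 - y) * log (1 - y))
      (log (1 + x) - log (1 - x)) x := by
  have hplus := (hasDerivAt_mul_log (by linarith [hx.1] : 1 + x ≠ 0)).comp x
    ((hasDerivAt_id x).const_add 1)
  have hminus := (hasDerivAt_mul_log (by linarith [hx.2] : 1 - x ≠ 0)).comp x
    ((hasDerivAt_id x).const_sub 1)
  exact (hplus.add hminus).congr_deriv (by ring)

lemma two_mul_le_log_one_add_sub_log_one_sub {x : ℝ} (h₀ : 0 ≤ x) (h₁ : x < 1) :
    2 * x ≤ log (1 + x) - log (1 - x) := by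
  have h := sum_range_le_log_div h₀ h₁ 1
  rw [log_div (by linarith) (by linarith)] at h
  norm_num at h
  linarith

theorem sq_le_mul_log_one_add_add_mul_log_one_sub {t : ℝ} (ht : |t| < 1) :
    t ^ 2 ≤ (1 + t) * log (1 + t) + (1 - t) * log (1 - t) := by
  wlog h₀ : 0 ≤ t generalizing t
  · have h := this (t := -t) (by rwa [abs_neg]) (by linarith)
    rw [neg_sq, ← sub_eq_add_neg, sub_neg_eq_add] at h
    linarith
  obtain ⟨-, h₁⟩ := abs_lt.mp ht
  set G : ℝ → ℝ := fun y ↦ (1 + y) * log (1 + y) + (1 - y) * log (1 - y) - y ^ 2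
  have hG : ∀ y ∈ Icc 0 t, HasDerivAt G (log (1 + y) - log (1 - y) - 2 * y) y := fun y hy ↦
    (hasDerivAt_mul_log_one_add_add_mul_log_one_sub ⟨by linarith [hy.1], by linarith [hy.2]⟩).sub
      (by simpa using hasDerivAt_pow 2 y)
  have hmono : MonotoneOn G (Icc 0 t) := by
    refine monotoneOn_of_hasDerivWithinAt_nonneg (convex_Icc 0 t)
      (fun y hy ↦ (hG y hy).continuousAt.continuousWithinAt)
      (fun y hy ↦ (hG y (interior_subset hy)).hasDerivWithinAt) fun y hy ↦ ?_
    rw [interior_Icc] at hy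
    linarith [two_mul_le_log_one_add_sub_log_one_sub hy.1.le (hy.2.trans h₁)]
  simpa [G] using hmono ⟨le_rfl, h₀⟩ ⟨h₀, le_rfl⟩ h₀

end Real

theorem stmt16 (t : ℝ) (ht : t ∈ Set.Ioo (0 : ℝ) 1) :
    Real.log (1 + t ^ 2 / 2) ≤
      (1 / 2) * ((1 + t) * Real.log (1 + t) + (1 - t) * Real.log (1 - t)) := by
  have hlog : log (1 + t ^ 2 / 2) ≤ t ^ 2 / 2 := by
    linarith [log_le_sub_one_of_pos (by positivity : 0 < 1 + t ^ 2 / 2)]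
  have hsq := sq_le_mul_log_one_add_add_mul_log_one_sub (abs_lt.mpr ⟨by linarith [ht.1], ht.2⟩)
  linarith
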